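/- Let κ : Λ × Λ → ℤ be an even symmetric bilinear form invariant under the Weyl group W, let N ≥ 1, and set Λ^♯ = {λ ∈ Λ : κ(λ, μ) ∈ Nℤ for all μ ∈ Λ}. For a coroot α let δ_α = N / gcd(N, κ(α,α)/2), the denominator of κ(α,α)/(2N). Then δ_α·α ∈ Λ^♯ for every coroot α. -/

import Mathlib

/-!
Invariance of `κ` under the reflection `s_α` gives, on pairing `s_α α = -α` with `s_α μ`,
the identity `κ(α, μ) = ⟨μ, α̌⟩ · κ(α, α)/2`. Hence `κ(δ_α α, μ)` is a multiple of
`δ_α · κ(α, α)/2`, which is divisible by `N` since `δ_α = N / gcd(N, κ(α, α)/2)`.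
-/

theorem LinearMap.two_mul_apply_eq_of_reflection_invariant {R M : Type*} [CommRing R]
    [AddCommGroup M] [Module R M] (κ : M →ₗ[R] M →ₗ[R] R) (f : Module.Dual R M) (x : M)
    (hfx : f x = 2) (hinv : ∀ y z : M, κ (y - f y • x) (z - f z • x) = κ y z) (z : M) :
    2 * κ x z = f z * κ x x := by
  have h := hinv x z
  rw [hfx, two_smul, sub_add_cancel_left] at h
  simp only [map_neg, map_sub, map_smul, LinearMap.neg_apply, smul_eq_mul] at h
  linear_combination -h

theorem Int.dvd_ediv_gcd_mul (N c : ℤ) : N ∣ N / (Int.gcd N c : ℤ) * c := by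
  have hgN := Int.gcd_dvd_left N c
  obtain ⟨d, hd⟩ := Int.gcd_dvd_right N c
  generalize (N.gcd c : ℤ) = g at hgN hd ⊢
  rw [hd, ← mul_assoc, Int.ediv_mul_cancel hgN]
  exact dvd_mul_right N d

theorem stmt_4_general (Λ : Type*) [AddCommGroup Λ] [Module ℤ Λ]
    (R : Finset (Module.Dual ℤ Λ)) (coroot : Module.Dual ℤ Λ → Λ)
    (hpair : ∀ a ∈ R, a (coroot a) = 2)
    (κ : Λ →ₗ[ℤ] Λ →ₗ[ℤ] ℤ)
    (heven : ∀ x : Λ, 2 ∣ κ x x)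
    (hinv : ∀ a ∈ R, ∀ x y : Λ,
      κ (x - a x • coroot a) (y - a y • coroot a) = κ x y)
    (N : ℤ)
    (δ : Λ → ℤ) (hδ : ∀ v : Λ, δ v = N / (Int.gcd N (κ v v / 2) : ℤ)) :
    ∀ a ∈ R, δ (coroot a) • coroot a ∈ {l : Λ | ∀ m : Λ, N ∣ κ l m} := by
  -- the `•` in the statement is `zsmul`; identify the given `ℤ`-module structure with it
  obtain rfl : ‹Module ℤ Λ› = AddCommGroup.toIntModule Λ := Subsingleton.elim _ _
  intro a ha m
  obtain ⟨c, hc⟩ := heven (coroot a)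
  have hκ : κ (coroot a) m = a m * c := by
    have h := κ.two_mul_apply_eq_of_reflection_invariant a (coroot a) (hpair a ha)
      (hinv a ha) m
    rw [hc] at h
    linarith
  have hδa : δ (coroot a) = N / (Int.gcd N c : ℤ) := by
    rw [hδ, hc, Int.mul_ediv_cancel_left _ two_ne_zero]
  show N ∣ κ (δ (coroot a) • coroot a) m
  rw [map_zsmul, LinearMap.smul_apply, hκ, hδa, smul_eq_mul, mul_left_comm]
  exact dvd_mul_of_dvd_right (Int.dvd_ediv_gcd_mul N c) _

/-- With `κ` an even symmetric bilinear form on `Λ` invariant under the Weyl group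
(equivalently, under each reflection), `N ≥ 1`,
`Λ^♯ = {λ | κ(λ, μ) ∈ Nℤ for all μ}` and `δ_α = N / gcd(N, κ(α,α)/2)` the denominator
of `κ(α,α)/(2N)`, one has `δ_α • α ∈ Λ^♯` for every coroot `α`. -/
theorem stmt_4 (Λ : Type*) [AddCommGroup Λ] [Module ℤ Λ]
    [Module.Free ℤ Λ] [Module.Finite ℤ Λ]
    (R : Finset (Module.Dual ℤ Λ)) (coroot : Module.Dual ℤ Λ → Λ)
    (hpair : ∀ a ∈ R, a (coroot a) = 2)
    (κ : Λ →ₗ[ℤ] Λ →ₗ[ℤ] ℤ) (hκsymm : ∀ x y : Λ, κ x y = κ y x)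
    (heven : ∀ x : Λ, 2 ∣ κ x x)
    (hinv : ∀ a ∈ R, ∀ x y : Λ,
      κ (x - a x • coroot a) (y - a y • coroot a) = κ x y)
    (N : ℤ) (hN : 1 ≤ N)
    (δ : Λ → ℤ) (hδ : ∀ v : Λ, δ v = N / (Int.gcd N (κ v v / 2) : ℤ)) :
    ∀ a ∈ R, δ (coroot a) • coroot a ∈ {l : Λ | ∀ m : Λ, N ∣ κ l m} :=
  stmt_4_general Λ R coroot hpair κ heven hinv N δ hδ
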